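/- arXiv:2605.06656 — 3 statements merged into one kernel-verified Lean document; each statement's English description precedes it below -/
import Mathlib

section
/- In partial set cover, if an optimal solution of k sets covers at least m elements, then after t greedy iterations the number of still-required elements (m minus elements covered so far, floored at 0) is at most m·(1 − 1/k)^t. -/
open Classical Finset

/-!
If `U` is the set covered so far, the `k` sets of the optimal solution together contribute at least
`m - |U|` elements outside `U`, so one of them contributes at least `(m - |U|) / k`, and the greedy
choice contributes at least as many. Hence each greedy step multiplies the deficit `max (m - |U|) 0`
by at most `1 - 1/k`.
-/

theorem Finset.card_biUnion_sdiff_le_card_mul {ι α : Type*} [DecidableEq α] {C : Finset ι}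
    {f : ι → Finset α} {U : Finset α} {g : ℕ} (hf : ∀ i ∈ C, #(f i \ U) ≤ g) :
    #(C.biUnion f \ U) ≤ #C * g := by
  have hsdiff : C.biUnion f \ U = C.biUnion fun i ↦ f i \ U := by
    ext; simp only [mem_sdiff, mem_biUnion]; tauto
  rw [hsdiff]
  calc #(C.biUnion fun i ↦ f i \ U) ≤ ∑ i ∈ C, #(f i \ U) := card_biUnion_le
    _ ≤ ∑ _i ∈ C, g := sum_le_sum hf
    _ = #C * g := by rw [sum_const, smul_eq_mul]

theorem card_biUnion_le_card_mul_card_sdiff_add {α : Type*} [DecidableEq α]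
    {F C : Finset (Finset α)} {U A : Finset α} (hCF : C ⊆ F)
    (hA : ∀ S ∈ F, #(S \ U) ≤ #(A \ U)) :
    #(C.biUnion id) ≤ #C * #(A \ U) + #U :=
  calc #(C.biUnion id) ≤ #(C.biUnion id \ U) + #U := card_le_card_sdiff_add_card
    _ ≤ #C * #(A \ U) + #U :=
      Nat.add_le_add_right (card_biUnion_sdiff_le_card_mul fun S hS ↦ hA S (hCF hS)) _

theorem max_sub_add_le_one_sub_inv_mul_max {m u g k : ℝ} (hk : 1 ≤ k) (hg : 0 ≤ g)
    (hgain : m - u ≤ k * g) :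
    max (m - (u + g)) 0 ≤ (1 - 1 / k) * max (m - u) 0 := by
  have hq : 0 ≤ 1 - 1 / k := sub_nonneg.2 (div_le_one_of_le₀ hk (by linarith))
  rcases le_or_gt (m - u) 0 with hmu | hmu
  · rw [max_eq_right (by linarith)]
    exact mul_nonneg hq (le_max_right _ _)
  · rw [max_eq_left hmu.le]
    refine max_le ?_ (mul_nonneg hq hmu.le)
    have hshare : (m - u) / k ≤ g := (div_le_iff₀' (by linarith)).2 hgain
    calc m - (u + g) ≤ m - u - (m - u) / k := by linarith
      _ = (1 - 1 / k) * (m - u) := by ring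

theorem le_mul_pow_of_succ_le_mul {d : ℕ → ℝ} {a q : ℝ} (hq : 0 ≤ q) (h0 : d 0 ≤ a)
    (hsucc : ∀ t, d (t + 1) ≤ q * d t) (t : ℕ) : d t ≤ a * q ^ t := by
  induction t with
  | zero => simpa using h0
  | succ t ih =>
    calc d (t + 1) ≤ q * d t := hsucc t
      _ ≤ q * (a * q ^ t) := mul_le_mul_of_nonneg_left ih hq
      _ = a * q ^ (t + 1) := by ring

theorem greedy_partial_cover_decay_general {α : Type*} (F : Finset (Finset α)) (k m : ℕ)
    (hk : 0 < k)
    (C : Finset (Finset α)) (hCF : C ⊆ F) (hCk : C.card = k)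
    (hcov : m ≤ (C.biUnion id).card)
    (G : ℕ → Finset α)
    (hGreedy : ∀ t, ∀ S ∈ F,
      (S \ (Finset.range t).biUnion G).card ≤
        (G t \ (Finset.range t).biUnion G).card)
    (t : ℕ) :
    max ((m : ℝ) - ((Finset.range t).biUnion G).card) 0 ≤
      (m : ℝ) * (1 - 1 / k) ^ t := by
  have hk1 : (1 : ℝ) ≤ k := Nat.one_le_cast.2 hk
  have hq : (0 : ℝ) ≤ 1 - 1 / k := sub_nonneg.2 (div_le_one_of_le₀ hk1 (by positivity))
  refine le_mul_pow_of_succ_le_mul (d := fun t ↦ max ((m : ℝ) - #((range t).biUnion G)) 0) hq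
    (by simp) (fun t ↦ ?_) t
  set U := (range t).biUnion G
  have hgain : (m : ℝ) - #U ≤ k * #(G t \ U) := by
    have hcovered := hcov.trans (hCk ▸ card_biUnion_le_card_mul_card_sdiff_add hCF (hGreedy t))
    rw [sub_le_iff_le_add]
    exact_mod_cast hcovered
  have hcard : (#((range (t + 1)).biUnion G) : ℝ) = #U + #(G t \ U) := by
    rw [range_add_one, biUnion_insert, ← card_sdiff_add_card, add_comm]
    push_cast; rfl
  rw [hcard]
  exact max_sub_add_le_one_sub_inv_mul_max hk1 (Nat.cast_nonneg _) hgain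

/-- In partial set cover, if an optimal solution of k sets covers at least m elements,
then after t greedy iterations the number of still-required elements (floored at 0)
is at most m·(1 − 1/k)^t. -/
theorem greedy_partial_cover_decay {α : Type*} (F : Finset (Finset α)) (k m : ℕ)
    (hk : 0 < k)
    (C : Finset (Finset α)) (hCF : C ⊆ F) (hCk : C.card = k)
    (hcov : m ≤ (C.biUnion id).card)
    (G : ℕ → Finset α)
    (hGmem : ∀ t, G t ∈ F)
    (hGreedy : ∀ t, ∀ S ∈ F,
      (S \ (Finset.range t).biUnion G).card ≤
        (G t \ (Finset.range t).biUnion G).card)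
    (t : ℕ) :
    max ((m : ℝ) - ((Finset.range t).biUnion G).card) 0 ≤
      (m : ℝ) * (1 - 1 / k) ^ t :=
  greedy_partial_cover_decay_general F k m hk C hCF hCk hcov G hGreedy t
end

section
/- The greedy algorithm for partial set cover with target m, when an optimal cover of size k exists, terminates with a subfamily of size at most k·(1 + ln m) (equivalently, it achieves an O(ln m) approximation). -/
/-!
While fewer than `m` elements are covered, the `k` optimal sets still cover at least `m - c`
elements outside the `c` already covered ones, so one of them, and hence the greedy choice, adds
at least `(m - c) / k` new elements. The deficit `m - c` therefore shrinks by the factor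
`1 - 1/k ≤ exp (-1/k)` at each step; since it is still at least `1` at step `T - 1`, this gives
`T - 1 ≤ k log m`.
-/

open Classical Finset Real

section Cover

variable {α : Type*} [DecidableEq α]

theorem card_biUnion_id_sdiff_le (C : Finset (Finset α)) (A : Finset α) {b : ℕ}
    (hb : ∀ S ∈ C, #(S \ A) ≤ b) : #(C.biUnion id \ A) ≤ #C * b := by
  have hsplit : C.biUnion id \ A = C.biUnion (· \ A) := by
    ext x; simp only [mem_sdiff, mem_biUnion, id]; tauto
  rw [hsplit]
  exact card_biUnion_le_card_mul C _ b hb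

theorem le_card_mul_card_sdiff_add_card {F C : Finset (Finset α)} {m : ℕ} (hCF : C ⊆ F)
    (hcov : m ≤ #(C.biUnion id)) (A B : Finset α) (hB : ∀ S ∈ F, #(S \ A) ≤ #(B \ A)) :
    m ≤ #C * #(B \ A) + #A :=
  calc m ≤ #(C.biUnion id \ A) + #A := hcov.trans card_le_card_sdiff_add_card
    _ ≤ #C * #(B \ A) + #A := by
      gcongr; exact card_biUnion_id_sdiff_le C A fun S hS => hB S (hCF hS)

theorem card_biUnion_range_succ (G : ℕ → Finset α) (t : ℕ) :
    #((range (t + 1)).biUnion G) = #((range t).biUnion G) + #(G t \ (range t).biUnion G) := by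
  rw [range_add_one, biUnion_insert, ← card_sdiff_add_card, add_comm]

theorem sub_card_biUnion_range_succ_le {G : ℕ → Finset α} {m k : ℝ} (hk : 0 < k) (t : ℕ)
    (h : m ≤ k * #(G t \ (range t).biUnion G) + #((range t).biUnion G)) :
    m - #((range (t + 1)).biUnion G) ≤
      (m - #((range t).biUnion G)) - (m - #((range t).biUnion G)) / k := by
  have hgain : (m - #((range t).biUnion G)) / k ≤ #(G t \ (range t).biUnion G) := by
    rw [div_le_iff₀' hk]; linarith
  rw [card_biUnion_range_succ]; push_cast; linarith

end Cover

theorem le_mul_exp_neg_of_le_sub_div {u : ℕ → ℝ} {k : ℝ} (hk : 1 ≤ k) (hu₀ : 0 ≤ u 0)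
    (hstep : ∀ t, u (t + 1) ≤ u t - u t / k) (t : ℕ) : u t ≤ u 0 * exp (-(t / k)) := by
  have hk₀ : 0 < k := by linarith
  have hρ : 0 ≤ 1 - 1 / k := by rw [sub_nonneg, div_le_one hk₀]; exact hk
  induction t with
  | zero => simp
  | succ t ih =>
    calc u (t + 1) ≤ (1 - 1 / k) * u t := by linarith [hstep t, mul_one_div (u t) k]
      _ ≤ (1 - 1 / k) * (u 0 * exp (-(t / k))) := by gcongr
      _ ≤ exp (-(1 / k)) * (u 0 * exp (-(t / k))) := by
        gcongr; linarith [add_one_le_exp (-(1 / k))]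
      _ = u 0 * exp (-((t + 1 : ℕ) / k)) := by
        rw [mul_left_comm, ← exp_add]; push_cast; ring_nf

theorem le_mul_log_of_one_le_mul_exp_neg {x y k : ℝ} (hk : 0 < k)
    (h : 1 ≤ y * exp (-(x / k))) : x ≤ k * log y := by
  have hexp : exp (x / k) ≤ y := by
    rwa [exp_neg, ← div_eq_mul_inv, one_le_div (exp_pos _)] at h
  have := (le_log_iff_exp_le ((exp_pos _).trans_le hexp)).2 hexp
  rwa [div_le_iff₀' hk] at this

theorem greedy_partial_cover_size_general {α : Type*} (F : Finset (Finset α)) (k m : ℕ)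
    (C : Finset (Finset α)) (hCF : C ⊆ F) (hCk : C.card = k)
    (hcov : m ≤ (C.biUnion id).card)
    (G : ℕ → Finset α)
    (hGreedy : ∀ t, ∀ S ∈ F,
      (S \ (Finset.range t).biUnion G).card ≤
        (G t \ (Finset.range t).biUnion G).card)
    (T : ℕ)
    (hTmin : ∀ s < T, ((Finset.range s).biUnion G).card < m) :
    (T : ℝ) ≤ k * (1 + Real.log m) := by
  set covered : ℕ → Finset α := fun t => (range t).biUnion G
  have hprogress (t : ℕ) : m ≤ k * #(G t \ covered t) + #(covered t) :=
    hCk ▸ le_card_mul_card_sdiff_add_card hCF hcov _ _ (hGreedy t)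
  have hlog_m : 0 ≤ log m := log_natCast_nonneg m
  cases T with
  | zero => push_cast; positivity
  | succ s =>
    have hs : #(covered s) < m := hTmin s s.lt_succ_self
    have hk : 1 ≤ k := Nat.pos_of_ne_zero (by rintro rfl; linarith [hprogress s])
    have hk' : (1 : ℝ) ≤ k := by exact_mod_cast hk
    have hcovered₀ : covered 0 = ∅ := by simp [covered]
    have hdecay := le_mul_exp_neg_of_le_sub_div (u := fun t => (m - #(covered t) : ℝ)) hk'
      (by simp [hcovered₀])
      (fun t => sub_card_biUnion_range_succ_le (by positivity) t (by exact_mod_cast hprogress t)) s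
    rw [hcovered₀, card_empty, Nat.cast_zero, sub_zero] at hdecay
    have hs' : (1 : ℝ) ≤ m - #(covered s) := by
      rw [le_sub_iff_add_le']; exact_mod_cast hs
    have hlog : (s : ℝ) ≤ k * log m :=
      le_mul_log_of_one_le_mul_exp_neg (by positivity) (hs'.trans hdecay)
    push_cast; nlinarith

/-- The greedy algorithm for partial set cover with target m, when an optimal cover
of size k exists, terminates with a subfamily of size at most k·(1 + ln m). -/
theorem greedy_partial_cover_size {α : Type*} (F : Finset (Finset α)) (k m : ℕ)
    (hk : 0 < k) (hm : 0 < m)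
    (C : Finset (Finset α)) (hCF : C ⊆ F) (hCk : C.card = k)
    (hcov : m ≤ (C.biUnion id).card)
    (G : ℕ → Finset α)
    (hGmem : ∀ t, G t ∈ F)
    (hGreedy : ∀ t, ∀ S ∈ F,
      (S \ (Finset.range t).biUnion G).card ≤
        (G t \ (Finset.range t).biUnion G).card)
    (T : ℕ)
    (hT : m ≤ ((Finset.range T).biUnion G).card)
    (hTmin : ∀ s < T, ((Finset.range s).biUnion G).card < m) :
    (T : ℝ) ≤ k * (1 + Real.log m) :=
  greedy_partial_cover_size_general F k m C hCF hCk hcov G hGreedy T hTmin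
end

section
/- For a budget of k sets, the greedy algorithm for maximum coverage covers at least (1 − (1 − 1/k)^k) ≥ (1 − 1/e) times as many elements as the best collection of k sets. -/
open Classical Finset

/-!
After `t` greedy steps, the part of the optimum still uncovered is covered by its at most `k`
sets, each of which adds at most as much as the greedy choice `G t`. So step `t` gains at least
a `1/k` fraction of the gap `OPT - cov t`, the gap shrinks by the factor `1 - 1/k` per step, and
after `k` steps it is at most `(1 - 1/k)^k * OPT`. Finally `(1 - 1/k)^k ≤ e⁻¹` because
`1 - x ≤ e^{-x}`.
-/

theorem le_pow_mul_of_succ_le_mul {u : ℕ → ℝ} {r : ℝ} (hr : 0 ≤ r)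
    (h : ∀ n, u (n + 1) ≤ r * u n) (n : ℕ) : u n ≤ r ^ n * u 0 := by
  induction n with
  | zero => simp
  | succ n ih =>
    calc u (n + 1) ≤ r * u n := h n
      _ ≤ r * (r ^ n * u 0) := mul_le_mul_of_nonneg_left ih hr
      _ = r ^ (n + 1) * u 0 := by ring

theorem sub_add_le_one_sub_one_div_mul {a c g k : ℝ} (hk : 0 < k) (h : a ≤ c + k * g) :
    a - (c + g) ≤ (1 - 1 / k) * (a - c) := by
  have hg : (a - c) / k ≤ g := by rw [div_le_iff₀ hk]; linarith
  calc a - (c + g) ≤ a - c - (a - c) / k := by linarith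
    _ = (1 - 1 / k) * (a - c) := by field_simp

namespace Finset

variable {α : Type*} [DecidableEq α]

theorem card_biUnion_id_le_card_add_card_mul (C : Finset (Finset α)) (X : Finset α) {m : ℕ}
    (h : ∀ S ∈ C, #(S \ X) ≤ m) : #(C.biUnion id) ≤ #X + #C * m := by
  have hsub : C.biUnion id ⊆ X ∪ C.biUnion (· \ X) := by
    intro x hx
    obtain ⟨S, hS, hxS⟩ := mem_biUnion.1 hx
    by_cases hxX : x ∈ X
    · exact mem_union_left _ hxX
    · exact mem_union_right _ (mem_biUnion.2 ⟨S, hS, mem_sdiff.2 ⟨hxS, hxX⟩⟩)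
  calc #(C.biUnion id) ≤ #(X ∪ C.biUnion (· \ X)) := card_le_card hsub
    _ ≤ #X + #(C.biUnion (· \ X)) := card_union_le _ _
    _ ≤ #X + #C * m := Nat.add_le_add_left (card_biUnion_le_card_mul _ _ _ h) _

theorem card_biUnion_range_succ (G : ℕ → Finset α) (t : ℕ) :
    #((range (t + 1)).biUnion G) = #((range t).biUnion G) + #(G t \ (range t).biUnion G) := by
  rw [range_add_one, biUnion_insert, ← card_sdiff_add_card, add_comm]

section Greedy

variable {F C : Finset (Finset α)} {G : ℕ → Finset α} {k : ℕ}

theorem card_biUnion_id_le_card_add_mul_greedy_gain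
    (hGreedy : ∀ t, ∀ S ∈ F,
      #(S \ (range t).biUnion G) ≤ #(G t \ (range t).biUnion G))
    (hCF : C ⊆ F) (hCk : #C ≤ k) (t : ℕ) :
    #(C.biUnion id) ≤ #((range t).biUnion G) + k * #(G t \ (range t).biUnion G) :=
  (card_biUnion_id_le_card_add_card_mul C _ fun S hS => hGreedy t S (hCF hS)).trans
    (Nat.add_le_add_left (Nat.mul_le_mul_right _ hCk) _)

theorem card_biUnion_id_sub_greedy_le
    (hGreedy : ∀ t, ∀ S ∈ F,
      #(S \ (range t).biUnion G) ≤ #(G t \ (range t).biUnion G))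
    (hCF : C ⊆ F) (hCk : #C ≤ k) (hk : 0 < k) (t : ℕ) :
    (#(C.biUnion id) : ℝ) - #((range t).biUnion G) ≤
      (1 - 1 / (k : ℝ)) ^ t * #(C.biUnion id) := by
  have hr : (0 : ℝ) ≤ 1 - 1 / (k : ℝ) := by
    rw [sub_nonneg, div_le_one (by exact_mod_cast hk)]
    exact_mod_cast hk
  refine (le_pow_mul_of_succ_le_mul (u := fun t => (#(C.biUnion id) : ℝ) - #((range t).biUnion G))
    hr (fun n => ?_) t).trans_eq (by simp)
  rw [card_biUnion_range_succ, Nat.cast_add]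
  apply sub_add_le_one_sub_one_div_mul (by exact_mod_cast hk)
  exact_mod_cast card_biUnion_id_le_card_add_mul_greedy_gain hGreedy hCF hCk n

end Greedy

end Finset

theorem greedy_max_coverage_general {α : Type*} (F : Finset (Finset α)) (k : ℕ) (hk : 0 < k)
    (G : ℕ → Finset α)
    (hGreedy : ∀ t, ∀ S ∈ F,
      (S \ (Finset.range t).biUnion G).card ≤
        (G t \ (Finset.range t).biUnion G).card)
    (C : Finset (Finset α)) (hCF : C ⊆ F) (hCk : C.card ≤ k) :
    (1 - (1 - 1 / (k : ℝ)) ^ k) * (C.biUnion id).card ≤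
        (((Finset.range k).biUnion G).card : ℝ) ∧
      1 - 1 / Real.exp 1 ≤ 1 - (1 - 1 / (k : ℝ)) ^ k := by
  refine ⟨?_, ?_⟩
  · have := card_biUnion_id_sub_greedy_le hGreedy hCF hCk hk k
    linarith
  · have := Real.one_sub_div_pow_le_exp_neg (n := k) (t := 1) (by exact_mod_cast hk)
    rw [Real.exp_neg, ← one_div] at this
    linarith

/-- Greedy for maximum coverage with budget k covers at least
(1 − (1 − 1/k)^k) ≥ 1 − 1/e times as many elements as the best k sets. -/
theorem greedy_max_coverage {α : Type*} (F : Finset (Finset α)) (k : ℕ) (hk : 0 < k)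
    (G : ℕ → Finset α)
    (hGmem : ∀ t, G t ∈ F)
    (hGreedy : ∀ t, ∀ S ∈ F,
      (S \ (Finset.range t).biUnion G).card ≤
        (G t \ (Finset.range t).biUnion G).card)
    (C : Finset (Finset α)) (hCF : C ⊆ F) (hCk : C.card ≤ k) :
    (1 - (1 - 1 / (k : ℝ)) ^ k) * (C.biUnion id).card ≤
        (((Finset.range k).biUnion G).card : ℝ) ∧
      1 - 1 / Real.exp 1 ≤ 1 - (1 - 1 / (k : ℝ)) ^ k :=
  greedy_max_coverage_general F k hk G hGreedy C hCF hCk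
end
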